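/- Two nodes u and v of a phylogenetic network form a convergent set (have the same cluster) if and only if the sets of taxa appearing anywhere inside their nested labels (ignoring nesting and multiplicities) are equal. -/

import Mathlib

open scoped Classical

/-- A finite directed acyclic graph whose leaves are (injectively) labeled in `S`. -/
structure LDag (S : Type) : Type 1 where
  V : Type
  fin : Fintype V
  adj : V → V → Prop
  acyclic : WellFounded (fun a b => adj b a)
  lab : V → S
  labInj : ∀ u v : V, (∀ w, ¬ adj u w) → (∀ w, ¬ adj v w) → lab u = lab v → u = v

attribute [instance] LDag.fin

namespace LDag

variable {S : Type}

/-- A leaf is a node with no children. -/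
def IsLeaf (N : LDag S) (v : N.V) : Prop := ∀ w, ¬ N.adj v w

/-- `v` is a descendant of `u` (every node is a descendant of itself). -/
def Desc (N : LDag S) (u v : N.V) : Prop := Relation.ReflTransGen N.adj u v

/-- The cluster of `u`: the set of labels of the leaves that are descendants of `u`. -/
def cluster (N : LDag S) (u : N.V) : Set S :=
  {s | ∃ v, N.Desc u v ∧ N.IsLeaf v ∧ N.lab v = s}

/-- A tree node: a node with at most one parent. -/
def TreeNode (N : LDag S) (v : N.V) : Prop :=
  ∀ p q, N.adj p v → N.adj q v → p = q

/-- A root: a node with no parents. -/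
def IsRoot (N : LDag S) (r : N.V) : Prop := ∀ u, ¬ N.adj u r

/-- Tree-child: every internal node has a child that is a tree node. -/
def TreeChild (N : LDag S) : Prop :=
  ∀ v, ¬ N.IsLeaf v → ∃ w, N.adj v w ∧ N.TreeNode w

/-- `PathN N u v k`: there is a directed path of length `k` from `u` to `v`. -/
inductive PathN (N : LDag S) : N.V → N.V → ℕ → Prop
  | refl (v : N.V) : PathN N v v 0
  | cons {u v w : N.V} {k : ℕ} : N.adj u v → PathN N v w k → PathN N u w (k + 1)

/-- The height of a node: the largest length of a directed path from it to a leaf. -/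
noncomputable def height (N : LDag S) (v : N.V) : ℕ :=
  sSup {k | ∃ s, N.IsLeaf s ∧ PathN N v s k}

/-- Node equivalence between (possibly equal) labeled DAGs, defined recursively:
two leaves with the same label are equivalent, and two internal nodes are equivalent
when their children can be matched into equivalent pairs. -/
noncomputable def equivTo (N1 N2 : LDag S) : N1.V → N2.V → Prop :=
  N1.acyclic.fix (fun u ih v =>
    (N1.IsLeaf u ∧ N2.IsLeaf v ∧ N1.lab u = N2.lab v) ∨
    (¬ N1.IsLeaf u ∧ ¬ N2.IsLeaf v ∧
      ∃ f : {w // N1.adj u w} ≃ {w // N2.adj v w},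
        ∀ w : {w // N1.adj u w}, ih w.1 w.2 (f w).1))

end LDag

/-- Pre-nested labels: finitely branching trees of labels (multisets are obtained
as a quotient by `NEq` below). -/
inductive PreNested (S : Type) : Type
  | leaf : S → PreNested S
  | node : List (PreNested S) → PreNested S

/-- Equality of pre-nested labels as nested multisets. -/
inductive NEq {S : Type} : PreNested S → PreNested S → Prop
  | leaf (a : S) : NEq (.leaf a) (.leaf a)
  | node {l m : List (PreNested S)} : List.Forall₂ NEq l m → NEq (.node l) (.node m)
  | perm {l m : List (PreNested S)} : l.Perm m → NEq (.node l) (.node m)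
  | symm {a b : PreNested S} : NEq a b → NEq b a
  | trans {a b c : PreNested S} : NEq a b → NEq b c → NEq a c

mutual
  theorem NEq.refl {S : Type} : ∀ a : PreNested S, NEq a a
    | .leaf s => .leaf s
    | .node l => .node (NEq.reflL l)
  theorem NEq.reflL {S : Type} : ∀ l : List (PreNested S), List.Forall₂ NEq l l
    | [] => .nil
    | a :: l => .cons (NEq.refl a) (NEq.reflL l)
end

instance PreNested.setoid (S : Type) : Setoid (PreNested S) :=
  ⟨NEq, ⟨NEq.refl, fun h => h.symm, fun h1 h2 => h1.trans h2⟩⟩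

/-- Nested multisets (of multisets of ...) of labels. -/
def Nested (S : Type) : Type := Quotient (PreNested.setoid S)

/-- `TaxaIn s p`: the taxon `s` occurs somewhere (at any nesting depth) in `p`. -/
inductive TaxaIn {S : Type} : S → PreNested S → Prop
  | leaf (s : S) : TaxaIn s (.leaf s)
  | node {s : S} {p : PreNested S} {l : List (PreNested S)} :
      p ∈ l → TaxaIn s p → TaxaIn s (.node l)

mutual
  /-- Nesting depth of a pre-nested label: a singleton `{s}` has depth 1. -/
  def depthP {S : Type} : PreNested S → ℕ
    | .leaf _ => 1
    | .node l => depthL l + 1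
  def depthL {S : Type} : List (PreNested S) → ℕ
    | [] => 0
    | p :: ps => max (depthP p) (depthL ps)
end

namespace LDag

variable {S : Type}

/-- The nested label of a node: the singleton of its label for a leaf, and the
multiset of the nested labels of its children otherwise. -/
noncomputable def nested (N : LDag S) : N.V → Nested S :=
  N.acyclic.fix (fun v ih =>
    if h : N.IsLeaf v then (⟦PreNested.leaf (N.lab v)⟧ : Nested S)
    else ⟦PreNested.node (((Finset.univ.filter (fun w => N.adj v w)).attach.toList).map
        (fun w => (ih w.1 (Finset.mem_filter.mp w.2).2).out))⟧)

/-- `Υ(N)`: the multiset of equivalence classes (= nested labels) of the nodes of `N`,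
with multiplicities. -/
noncomputable def UpsilonM (N : LDag S) : Multiset (Nested S) :=
  Finset.univ.val.map N.nested

/-- Label-preserving isomorphisms of labeled DAGs. -/
structure Iso (N1 N2 : LDag S) where
  toEquiv : N1.V ≃ N2.V
  adj_iff : ∀ u v : N1.V, N2.adj (toEquiv u) (toEquiv v) ↔ N1.adj u v
  lab_leaf : ∀ v : N1.V, N1.IsLeaf v → N2.lab (toEquiv v) = N1.lab v

def IsIso (N1 N2 : LDag S) : Prop := Nonempty (Iso N1 N2)

theorem Iso.leaf_map {N1 N2 : LDag S} (e : Iso N1 N2) {v : N1.V} (h : N1.IsLeaf v) :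
    N2.IsLeaf (e.toEquiv v) := by
  intro w hw
  have hw' : N2.adj (e.toEquiv v) (e.toEquiv (e.toEquiv.symm w)) := by simpa using hw
  exact h _ ((e.adj_iff _ _).mp hw')

def Iso.refl (N : LDag S) : Iso N N :=
  ⟨Equiv.refl _, fun _ _ => Iff.rfl, fun _ _ => rfl⟩

def Iso.symm {N1 N2 : LDag S} (e : Iso N1 N2) : Iso N2 N1 where
  toEquiv := e.toEquiv.symm
  adj_iff u v := by rw [← e.adj_iff]; simp
  lab_leaf v hv := by
    have h1 : N1.IsLeaf (e.toEquiv.symm v) := by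
      intro w hw
      have : N2.adj v (e.toEquiv w) := by
        have := (e.adj_iff (e.toEquiv.symm v) w).mpr hw
        simpa using this
      exact hv _ this
    have := e.lab_leaf _ h1
    simpa using this.symm

def Iso.trans {N1 N2 N3 : LDag S} (e : Iso N1 N2) (f : Iso N2 N3) : Iso N1 N3 where
  toEquiv := e.toEquiv.trans f.toEquiv
  adj_iff u v := by
    simp only [Equiv.trans_apply]
    rw [f.adj_iff, e.adj_iff]
  lab_leaf v hv := by
    simp only [Equiv.trans_apply]
    rw [f.lab_leaf _ (e.leaf_map hv), e.lab_leaf _ hv]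

instance isoSetoid (S : Type) : Setoid (LDag S) :=
  ⟨IsIso, ⟨fun N => ⟨Iso.refl N⟩, fun ⟨e⟩ => ⟨e.symm⟩, fun ⟨e⟩ ⟨f⟩ => ⟨e.trans f⟩⟩⟩

/-- Isomorphism classes of labeled DAGs. -/
def IsoClass (S : Type) : Type 1 := Quotient (isoSetoid S)

/-- The rooted subnetwork `N(u)` generated by a node `u`: the induced subgraph on
the set of descendants of `u`. -/
noncomputable def subnet (N : LDag S) (u : N.V) : LDag S where
  V := {v // N.Desc u v}
  fin := Subtype.fintype _
  adj a b := N.adj a.1 b.1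
  acyclic := by
    have h : (fun (a b : {v // N.Desc u v}) => N.adj b.1 a.1) =
        InvImage (fun a b => N.adj b a) Subtype.val := rfl
    rw [h]
    exact InvImage.wf _ N.acyclic
  lab v := N.lab v.1
  labInj := by
    intro a b ha hb hlab
    apply Subtype.ext
    refine N.labInj a.1 b.1 ?_ ?_ hlab
    · intro w hw
      exact ha ⟨w, a.2.trans (Relation.ReflTransGen.single hw)⟩ hw
    · intro w hw
      exact hb ⟨w, b.2.trans (Relation.ReflTransGen.single hw)⟩ hw

/-- `Σ(N)`: the multiset of isomorphism classes of the rooted subnetworks generated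
by the nodes of `N`, with multiplicities. -/
noncomputable def SigmaM (N : LDag S) : Multiset (IsoClass S) :=
  Finset.univ.val.map (fun u => (Quotient.mk (isoSetoid S) (N.subnet u) : IsoClass S))

/-- Nakhleh's dissimilarity `m(N1,N2) = |Υ(N1) △ Υ(N2)| / 2`. -/
noncomputable def mDist (N1 N2 : LDag S) : ℝ :=
  (((N1.UpsilonM - N2.UpsilonM) + (N2.UpsilonM - N1.UpsilonM)).card : ℝ) / 2

/-- The distance `σ(N1,N2) = |Σ(N1) △ Σ(N2)| / 2`. -/
noncomputable def sigmaDist (N1 N2 : LDag S) : ℝ :=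
  (((N1.SigmaM - N2.SigmaM) + (N2.SigmaM - N1.SigmaM)).card : ℝ) / 2

end LDag

/-- An `S`-DAG: a labeled DAG whose leaves are bijectively labeled by `S`. -/
structure SDag (S : Type) extends LDag S where
  surjLab : ∀ s : S, ∃ v, toLDag.IsLeaf v ∧ toLDag.lab v = s

/-- A phylogenetic network on `S`: a rooted `S`-DAG. -/
structure PhyloNetwork (S : Type) extends SDag S where
  rooted : ∃! r, toLDag.IsRoot r

/-!
Occurrence of a taxon is invariant under `NEq`, so the set of taxa of a nested label does not
depend on the representative. That set and the cluster obey the same recursion on the DAG: a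
leaf contributes its own label, an internal node the union over its children. Well-founded
induction therefore identifies the taxa of `ℓ(u)` with the cluster of `u`, for every node.
-/

theorem taxaIn_leaf_iff {S : Type} {s a : S} : TaxaIn s (.leaf a) ↔ s = a := by
  constructor
  · rintro ⟨⟩
    rfl
  · rintro rfl
    exact .leaf s

theorem taxaIn_node_iff {S : Type} {s : S} {l : List (PreNested S)} :
    TaxaIn s (.node l) ↔ ∃ p ∈ l, TaxaIn s p := by
  constructor
  · rintro ⟨⟩
    exact ⟨_, ‹_›, ‹_›⟩
  · rintro ⟨p, hp, hs⟩
    exact .node hp hs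

theorem NEq.taxaIn_iff {S : Type} {a b : PreNested S} (h : NEq a b) (s : S) :
    TaxaIn s a ↔ TaxaIn s b := by
  induction h using NEq.rec
    (motive_2 := fun l m _ => (∃ p ∈ l, TaxaIn s p) ↔ ∃ q ∈ m, TaxaIn s q) with
  | leaf => rfl
  | node _ ih => simpa only [taxaIn_node_iff] using ih
  | perm hlm => simp only [taxaIn_node_iff, hlm.mem_iff]
  | symm _ ih => exact ih.symm
  | trans _ _ ih₁ ih₂ => exact ih₁.trans ih₂
  | nil => rfl
  | cons _ _ ih ihs => simpa only [List.exists_mem_cons_iff] using or_congr ih ihs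

def Nested.taxa {S : Type} (x : Nested S) : Set S :=
  {s | ∃ p : PreNested S, Quotient.mk (PreNested.setoid S) p = x ∧ TaxaIn s p}

theorem Nested.taxa_mk {S : Type} (p : PreNested S) :
    Nested.taxa (Quotient.mk (PreNested.setoid S) p) = {s | TaxaIn s p} := by
  ext s
  constructor
  · rintro ⟨q, hq, hs⟩
    exact ((Quotient.exact hq).taxaIn_iff s).mp hs
  · exact fun hs => ⟨p, rfl, hs⟩

theorem Nested.mem_taxa_iff_taxaIn_out {S : Type} (x : Nested S) (s : S) :
    s ∈ x.taxa ↔ TaxaIn s x.out := by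
  conv_lhs => rw [← Quotient.out_eq x]
  rw [Nested.taxa_mk, Set.mem_ofPred_eq]

namespace LDag

variable {S : Type} (N : LDag S) {u : N.V}

theorem nested_of_isLeaf (hu : N.IsLeaf u) :
    N.nested u = ⟦PreNested.leaf (N.lab u)⟧ := by
  rw [nested, N.acyclic.fix_eq]
  exact dif_pos hu

theorem nested_of_not_isLeaf (hu : ¬ N.IsLeaf u) :
    N.nested u = ⟦PreNested.node (((Finset.univ.filter (fun w => N.adj u w)).attach.toList).map
        (fun w => (N.nested w.1).out))⟧ := by
  rw [nested, N.acyclic.fix_eq]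
  exact dif_neg hu

theorem taxa_nested_of_isLeaf (hu : N.IsLeaf u) : (N.nested u).taxa = {N.lab u} := by
  rw [nested_of_isLeaf N hu, Nested.taxa_mk]
  ext s
  exact taxaIn_leaf_iff

theorem mem_taxa_nested_of_not_isLeaf (hu : ¬ N.IsLeaf u) (s : S) :
    s ∈ (N.nested u).taxa ↔ ∃ w, N.adj u w ∧ s ∈ (N.nested w).taxa := by
  rw [nested_of_not_isLeaf N hu, Nested.taxa_mk, Set.mem_ofPred_eq, taxaIn_node_iff]
  simp [Nested.mem_taxa_iff_taxaIn_out]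

theorem cluster_of_isLeaf (hu : N.IsLeaf u) : N.cluster u = {N.lab u} := by
  ext s
  constructor
  · rintro ⟨w, huw, -, rfl⟩
    obtain rfl | ⟨c, huc, -⟩ := huw.cases_head
    · rfl
    · exact absurd huc (hu c)
  · rintro rfl
    exact ⟨u, .refl, hu, rfl⟩

theorem mem_cluster_of_not_isLeaf (hu : ¬ N.IsLeaf u) (s : S) :
    s ∈ N.cluster u ↔ ∃ w, N.adj u w ∧ s ∈ N.cluster w := by
  constructor
  · rintro ⟨x, hux, hx, rfl⟩
    obtain rfl | ⟨c, huc, hcx⟩ := hux.cases_head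
    · exact absurd hx hu
    · exact ⟨c, huc, x, hcx, hx, rfl⟩
  · rintro ⟨w, huw, x, hwx, hx, rfl⟩
    exact ⟨x, .head huw hwx, hx, rfl⟩

theorem taxa_nested (u : N.V) : (N.nested u).taxa = N.cluster u := by
  induction u using N.acyclic.induction with
  | _ u ih =>
  by_cases hu : N.IsLeaf u
  · rw [taxa_nested_of_isLeaf N hu, cluster_of_isLeaf N hu]
  · ext s
    rw [mem_taxa_nested_of_not_isLeaf N hu, mem_cluster_of_not_isLeaf N hu]
    exact exists_congr fun w => and_congr_right fun huw => by rw [ih w huw]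

end LDag

/-- Two nodes of a phylogenetic network have the same cluster iff the sets of taxa
appearing anywhere inside their nested labels (ignoring nesting and multiplicities)
are equal. -/
theorem cluster_eq_iff_taxa_eq {S : Type} (N : PhyloNetwork S) (u v : N.V) :
    N.toLDag.cluster u = N.toLDag.cluster v ↔
      {s : S | ∃ p : PreNested S,
          Quotient.mk (PreNested.setoid S) p = N.toLDag.nested u ∧ TaxaIn s p} =
      {s : S | ∃ p : PreNested S,
          Quotient.mk (PreNested.setoid S) p = N.toLDag.nested v ∧ TaxaIn s p} := by
  change _ ↔ (N.toLDag.nested u).taxa = (N.toLDag.nested v).taxa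
  rw [LDag.taxa_nested, LDag.taxa_nested]
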